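/- Let f : Ω → ℝ where Ω ⊂ ℝ² and suppose Δf ≥ 0 in the interior of a bounded domain Ω, f is continuous on the closure, and f ≤ 0 on ∂Ω. Then for the specific barrier f = ψ_y² - A(r-y) + B(r-y)², where ψ is C² with Δψ_y = -ω'(ψ)ψ_y, |ψ_y|²|ω'(ψ)| ≤ B in Ω, one has Δf ≥ 2|∇ψ_y|² ≥ 0 in Ω; consequently by the maximum principle ψ_y² ≤ A(r-y) - B(r-y)² ≤ A(r-y) throughout Ω. -/

import Mathlib

open Real

/-- Partial derivative in the first variable. -/
noncomputable def pd1 (f : ℝ → ℝ → ℝ) : ℝ → ℝ → ℝ := fun x y => deriv (fun x' => f x' y) x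

/-- Partial derivative in the second variable. -/
noncomputable def pd2 (f : ℝ → ℝ → ℝ) : ℝ → ℝ → ℝ := fun x y => deriv (fun y' => f x y') y

/-- Laplacian of a function of two real variables. -/
noncomputable def lap (f : ℝ → ℝ → ℝ) : ℝ → ℝ → ℝ :=
  fun x y => pd1 (pd1 f) x y + pd2 (pd2 f) x y

/-! Differentiating `Δψ + ω(ψ) = 0` in `y` (mixed partials of the `C³` function `ψ` commute)
gives `Δψ_y = -ω'(ψ) ψ_y`, hence `Δ(ψ_y²) = 2|∇ψ_y|² - 2ω'(ψ) ψ_y² ≥ 2|∇ψ_y|² - 2B`, while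
`Δ(-A(r - y) + B(r - y)²) = 2B`. So `f` is subharmonic in `Ω`, and the weak maximum principle gives
`f ≤ 0` there. For the maximum principle, `f + εx²` has `Δ > 0`, so by the second-derivative test
its maximum over the compact set `closure Ω` is attained on the frontier. -/

open Filter Topology Set Function

section OneVariable

variable {v w : ℝ → ℝ}

theorem deriv_deriv_eq_of_hasDerivAt {v' : ℝ → ℝ} {a t : ℝ} (hv : ∀ s, HasDerivAt v (v' s) s)
    (hv' : HasDerivAt v' a t) : deriv (deriv v) t = a := by
  rw [funext fun s => (hv s).deriv]
  exact hv'.deriv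

theorem deriv_deriv_add (hv : ContDiff ℝ 2 v) (hw : ContDiff ℝ 2 w) (t : ℝ) :
    deriv (deriv fun s => v s + w s) t = deriv (deriv v) t + deriv (deriv w) t :=
  deriv_deriv_eq_of_hasDerivAt
    (fun s => (hv.differentiable two_ne_zero s).hasDerivAt.add
      (hw.differentiable two_ne_zero s).hasDerivAt)
    ((hv.differentiable_deriv_two t).hasDerivAt.add (hw.differentiable_deriv_two t).hasDerivAt)

theorem deriv_deriv_sq (hv : ContDiff ℝ 2 v) (t : ℝ) :
    deriv (deriv fun s => v s ^ 2) t = 2 * (deriv v t ^ 2 + v t * deriv (deriv v) t) := by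
  have hd := fun s => (hv.differentiable two_ne_zero s).hasDerivAt
  refine deriv_deriv_eq_of_hasDerivAt (v' := fun s => 2 * (v s * deriv v s))
    (fun s => ((hd s).pow 2).congr_deriv (by ring)) ?_
  exact (((hd t).mul (hv.differentiable_deriv_two t).hasDerivAt).const_mul 2).congr_deriv (by ring)

theorem deriv_deriv_quadratic (a b c t : ℝ) :
    deriv (deriv fun s => a + b * s + c * s ^ 2) t = 2 * c := by
  refine deriv_deriv_eq_of_hasDerivAt (v' := fun s => b + 2 * c * s) (fun s => ?_) ?_
  · exact ((((hasDerivAt_id s).const_mul b).const_add a).add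
      (((hasDerivAt_id s).pow 2).const_mul c)).congr_deriv (by simp; ring)
  · exact (((hasDerivAt_id t).const_mul (2 * c)).const_add b).congr_deriv (by ring)

theorem deriv_deriv_add_quadratic (hv : ContDiff ℝ 2 v) (a b c t : ℝ) :
    deriv (deriv fun s => v s + (a + b * s + c * s ^ 2)) t = deriv (deriv v) t + 2 * c := by
  rw [deriv_deriv_add hv (by fun_prop), deriv_deriv_quadratic]

theorem IsLocalMax.deriv_deriv_nonpos {a : ℝ} (h : IsLocalMax v a) (hc : ContinuousAt v a) :
    deriv (deriv v) a ≤ 0 := by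
  by_contra! hpos
  -- `a` is then also a local minimum, so `v` is locally constant and `v'' a = 0`.
  have hmin := isLocalMin_of_deriv_deriv_pos hpos h.deriv_eq_zero hc
  have hconst : v =ᶠ[𝓝 a] fun _ => v a := (h.and hmin).mono fun _ hx => le_antisymm hx.1 hx.2
  have hderiv : deriv v =ᶠ[𝓝 a] fun _ => 0 := hconst.deriv.trans (by simp)
  simp [hderiv.deriv_eq] at hpos

end OneVariable

section Partial

variable {h : ℝ → ℝ → ℝ} {n m : WithTop ℕ∞}

theorem lap_eq_deriv_deriv (x y : ℝ) :
    lap h x y = deriv (deriv fun s => h s y) x + deriv (deriv fun s => h x s) y :=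
  rfl

theorem ContDiff.of_uncurry_left (hh : ContDiff ℝ n (uncurry h)) (y : ℝ) :
    ContDiff ℝ n fun x => h x y :=
  hh.comp (contDiff_prodMk_left y)

theorem ContDiff.of_uncurry_right (hh : ContDiff ℝ n (uncurry h)) (x : ℝ) :
    ContDiff ℝ n fun y => h x y :=
  hh.comp (contDiff_prodMk_right x)

theorem pd1_eq_fderiv {x y : ℝ} (hd : DifferentiableAt ℝ (uncurry h) (x, y)) :
    pd1 h x y = fderiv ℝ (uncurry h) (x, y) (1, 0) := by
  have := hd.hasFDerivAt.comp_hasDerivAt x ((hasDerivAt_id x).prodMk (hasDerivAt_const x y))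
  exact this.deriv

theorem pd2_eq_fderiv {x y : ℝ} (hd : DifferentiableAt ℝ (uncurry h) (x, y)) :
    pd2 h x y = fderiv ℝ (uncurry h) (x, y) (0, 1) := by
  have := hd.hasFDerivAt.comp_hasDerivAt y ((hasDerivAt_const y x).prodMk (hasDerivAt_id y))
  exact this.deriv

theorem uncurry_pd1_eq_fderiv (hd : Differentiable ℝ (uncurry h)) :
    uncurry (pd1 h) = fun p => fderiv ℝ (uncurry h) p (1, 0) :=
  funext fun p => pd1_eq_fderiv (hd p)

theorem uncurry_pd2_eq_fderiv (hd : Differentiable ℝ (uncurry h)) :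
    uncurry (pd2 h) = fun p => fderiv ℝ (uncurry h) p (0, 1) :=
  funext fun p => pd2_eq_fderiv (hd p)

theorem ContDiff.uncurry_pd1 (hh : ContDiff ℝ n (uncurry h)) (hmn : m + 1 ≤ n) :
    ContDiff ℝ m (uncurry (pd1 h)) := by
  rw [uncurry_pd1_eq_fderiv (hh.differentiable (by rintro rfl; simp at hmn))]
  exact (hh.fderiv_right hmn).clm_apply contDiff_const

theorem ContDiff.uncurry_pd2 (hh : ContDiff ℝ n (uncurry h)) (hmn : m + 1 ≤ n) :
    ContDiff ℝ m (uncurry (pd2 h)) := by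
  rw [uncurry_pd2_eq_fderiv (hh.differentiable (by rintro rfl; simp at hmn))]
  exact (hh.fderiv_right hmn).clm_apply contDiff_const

theorem ContDiff.uncurry_lap (hh : ContDiff ℝ n (uncurry h)) (hmn : m + 2 ≤ n) :
    ContDiff ℝ m (uncurry (lap h)) := by
  rw [← one_add_one_eq_two, ← add_assoc] at hmn
  exact ((hh.uncurry_pd1 hmn).uncurry_pd1 le_rfl).add ((hh.uncurry_pd2 hmn).uncurry_pd2 le_rfl)

theorem pd1_pd2_comm (hh : ContDiff ℝ 2 (uncurry h)) : pd1 (pd2 h) = pd2 (pd1 h) := by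
  funext x y
  have hd := hh.differentiable two_ne_zero
  have hdd : Differentiable ℝ (fderiv ℝ (uncurry h)) :=
    (hh.fderiv_right (m := 1) (by norm_num)).differentiable one_ne_zero
  rw [pd1_eq_fderiv (((hh.uncurry_pd2 (m := 1) (by norm_num)).differentiable one_ne_zero) _),
    pd2_eq_fderiv (((hh.uncurry_pd1 (m := 1) (by norm_num)).differentiable one_ne_zero) _),
    uncurry_pd2_eq_fderiv hd, uncurry_pd1_eq_fderiv hd,
    fderiv_clm_apply (hdd _) (differentiableAt_const _),
    fderiv_clm_apply (hdd _) (differentiableAt_const _)]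
  simpa using (hh.contDiffAt.isSymmSndFDerivAt (by simp)).eq (1, 0) (0, 1)

theorem lap_pd2 (hh : ContDiff ℝ 3 (uncurry h)) (x y : ℝ) :
    lap (pd2 h) x y = pd2 (lap h) x y := by
  have h₁ : ContDiff ℝ 2 (uncurry (pd1 h)) := hh.uncurry_pd1 (by norm_num)
  have h₁₁ : ContDiff ℝ 1 (uncurry (pd1 (pd1 h))) := h₁.uncurry_pd1 (by norm_num)
  have h₂₂ : ContDiff ℝ 1 (uncurry (pd2 (pd2 h))) :=
    (hh.uncurry_pd2 (m := 2) (by norm_num)).uncurry_pd2 (by norm_num)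
  have hsum : pd2 (lap h) x y = pd2 (pd1 (pd1 h)) x y + pd2 (pd2 (pd2 h)) x y :=
    deriv_fun_add ((h₁₁.of_uncurry_right x).differentiable one_ne_zero y)
      ((h₂₂.of_uncurry_right x).differentiable one_ne_zero y)
  rw [hsum, ← pd1_pd2_comm h₁, ← pd1_pd2_comm (hh.of_le (by norm_num))]
  rfl

end Partial

theorem lap_sq_sub_mul_add_mul_sq {u : ℝ → ℝ → ℝ} (hu : ContDiff ℝ 2 (uncurry u))
    (A B r x y : ℝ) :
    lap (fun x y => u x y ^ 2 - A * (r - y) + B * (r - y) ^ 2) x y =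
      2 * (pd1 u x y ^ 2 + pd2 u x y ^ 2) + 2 * u x y * lap u x y + 2 * B := by
  have ex : (fun s => u s y ^ 2 - A * (r - y) + B * (r - y) ^ 2) =
      fun s => u s y ^ 2 + ((-A * (r - y) + B * (r - y) ^ 2) + 0 * s + 0 * s ^ 2) :=
    funext fun s => by ring
  have ey : (fun s => u x s ^ 2 - A * (r - s) + B * (r - s) ^ 2) =
      fun s => u x s ^ 2 + ((B * r ^ 2 - A * r) + (A - 2 * B * r) * s + B * s ^ 2) :=
    funext fun s => by ring
  rw [lap_eq_deriv_deriv, ex, ey, deriv_deriv_add_quadratic ((hu.of_uncurry_left y).pow 2),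
    deriv_deriv_add_quadratic ((hu.of_uncurry_right x).pow 2),
    deriv_deriv_sq (hu.of_uncurry_left y), deriv_deriv_sq (hu.of_uncurry_right x),
    lap_eq_deriv_deriv (h := u)]
  unfold pd1 pd2
  ring

theorem lap_add_mul_sq {F : ℝ → ℝ → ℝ} (hF : ContDiff ℝ 2 (uncurry F)) (ε x y : ℝ) :
    lap (fun x y => F x y + ε * x ^ 2) x y = lap F x y + 2 * ε := by
  have ex : (fun s => F s y + ε * s ^ 2) = fun s => F s y + (0 + 0 * s + ε * s ^ 2) :=
    funext fun s => by ring
  have ey : (fun s => F x s + ε * x ^ 2) = fun s => F x s + (ε * x ^ 2 + 0 * s + 0 * s ^ 2) :=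
    funext fun s => by ring
  rw [lap_eq_deriv_deriv, ex, ey, deriv_deriv_add_quadratic (hF.of_uncurry_left y),
    deriv_deriv_add_quadratic (hF.of_uncurry_right x), lap_eq_deriv_deriv]
  ring

theorem lap_pd2_add_deriv_mul_eq_zero {Ω : Set (ℝ × ℝ)} {ψ : ℝ → ℝ → ℝ} {ω : ℝ → ℝ}
    (hΩ : IsOpen Ω) (hψ : ContDiff ℝ 3 (uncurry ψ)) (hω : ContDiff ℝ 1 ω)
    (hpde : ∀ p ∈ Ω, lap ψ p.1 p.2 + ω (ψ p.1 p.2) = 0) :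
    ∀ p ∈ Ω, lap (pd2 ψ) p.1 p.2 + deriv ω (ψ p.1 p.2) * pd2 ψ p.1 p.2 = 0 := by
  rintro ⟨x, y⟩ hp
  have hzero : (fun s => lap ψ x s + ω (ψ x s)) =ᶠ[𝓝 y] fun _ => 0 := by
    filter_upwards [(continuous_const.prodMk continuous_id).continuousAt.preimage_mem_nhds
      (hΩ.mem_nhds hp)] with s hs using hpde (x, s) hs
  have hlap : ContDiff ℝ 1 (uncurry (lap ψ)) := hψ.uncurry_lap (by norm_num)
  have hderiv : HasDerivAt (fun s => lap ψ x s + ω (ψ x s))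
      (pd2 (lap ψ) x y + deriv ω (ψ x y) * pd2 ψ x y) y :=
    ((hlap.of_uncurry_right x).differentiable one_ne_zero y).hasDerivAt.add
      ((hω.differentiable one_ne_zero _).hasDerivAt.comp y
        ((hψ.of_uncurry_right x).differentiable (by norm_num) y).hasDerivAt)
  rw [lap_pd2 hψ]
  simpa using hderiv.deriv.symm.trans hzero.deriv_eq

section MaximumPrinciple

variable {Ω : Set (ℝ × ℝ)} {F : ℝ → ℝ → ℝ}

theorem lap_nonpos_of_isLocalMax {p : ℝ × ℝ} (hc : Continuous (uncurry F))
    (hmax : IsLocalMax (uncurry F) p) : lap F p.1 p.2 ≤ 0 := by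
  have hx : Continuous fun s : ℝ => (s, p.2) := continuous_id.prodMk continuous_const
  have hy : Continuous fun s : ℝ => (p.1, s) := continuous_const.prodMk continuous_id
  exact add_nonpos
    ((hmax.comp_continuous hx.continuousAt).deriv_deriv_nonpos (hc.comp hx).continuousAt)
    ((hmax.comp_continuous hy.continuousAt).deriv_deriv_nonpos (hc.comp hy).continuousAt)

theorem exists_mem_frontier_le_of_lap_pos (hΩo : IsOpen Ω) (hΩb : Bornology.IsBounded Ω)
    (hc : Continuous (uncurry F)) (hlap : ∀ p ∈ Ω, 0 < lap F p.1 p.2) {q : ℝ × ℝ} (hq : q ∈ Ω) :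
    ∃ p ∈ frontier Ω, F q.1 q.2 ≤ F p.1 p.2 := by
  obtain ⟨p, hpcl, hpmax⟩ :=
    hΩb.isCompact_closure.exists_isMaxOn ⟨q, subset_closure hq⟩ hc.continuousOn
  refine ⟨p, ?_, hpmax (subset_closure hq)⟩
  rw [hΩo.frontier_eq]
  refine ⟨hpcl, fun hpΩ => ?_⟩
  have := lap_nonpos_of_isLocalMax hc
    (hpmax.isLocalMax (mem_of_superset (hΩo.mem_nhds hpΩ) subset_closure))
  linarith [hlap p hpΩ]

theorem nonpos_of_lap_nonneg (hΩo : IsOpen Ω) (hΩb : Bornology.IsBounded Ω)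
    (hF : ContDiff ℝ 2 (uncurry F)) (hlap : ∀ p ∈ Ω, 0 ≤ lap F p.1 p.2)
    (hfr : ∀ p ∈ frontier Ω, F p.1 p.2 ≤ 0) : ∀ p ∈ Ω, F p.1 p.2 ≤ 0 := by
  intro q hq
  obtain ⟨R, hR⟩ := hΩb.subset_closedBall 0
  refine le_of_forall_pos_le_add fun δ hδ => ?_
  -- chosen so that the perturbation `ε x²` stays below `δ` on `closure Ω`
  set ε := δ / (R ^ 2 + 1)
  have hε : 0 < ε := by positivity
  obtain ⟨p, hp, hqp⟩ := exists_mem_frontier_le_of_lap_pos (F := fun x y => F x y + ε * x ^ 2)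
    hΩo hΩb (by fun_prop) (fun p hp => by rw [lap_add_mul_sq hF]; linarith [hlap p hp]) hq
  have hpR : p.1 ^ 2 ≤ R ^ 2 := by
    have := closure_minimal hR Metric.isClosed_closedBall (frontier_subset_closure hp)
    rw [Metric.mem_closedBall, dist_zero_right] at this
    have h1 : |p.1| ≤ R := (Real.norm_eq_abs p.1 ▸ norm_fst_le p).trans this
    exact sq_le_sq' (abs_le.mp h1).1 (abs_le.mp h1).2
  have hεR : ε * R ^ 2 ≤ δ := by
    rw [div_mul_eq_mul_div, div_le_iff₀ (by positivity)]; nlinarith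
  nlinarith [hfr p hp, sq_nonneg q.1]

end MaximumPrinciple

theorem stmt_19_general (r A B : ℝ) (Ω : Set (ℝ × ℝ))
    (hΩopen : IsOpen Ω) (hΩbdd : Bornology.IsBounded Ω)
    (ψ : ℝ → ℝ → ℝ) (ω : ℝ → ℝ)
    (hψ : ContDiff ℝ 3 (Function.uncurry ψ)) (hω : ContDiff ℝ 1 ω)
    (hpde : ∀ p ∈ Ω, lap ψ p.1 p.2 + ω (ψ p.1 p.2) = 0)
    (hB : ∀ p ∈ Ω, (pd2 ψ p.1 p.2) ^ 2 * |deriv ω (ψ p.1 p.2)| ≤ B)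
    (f : ℝ → ℝ → ℝ)
    (hf : ∀ x y : ℝ, f x y = (pd2 ψ x y) ^ 2 - A * (r - y) + B * (r - y) ^ 2)
    (hbdry : ∀ p ∈ frontier Ω, f p.1 p.2 ≤ 0) :
    (∀ p ∈ Ω,
      lap f p.1 p.2 ≥ 2 * ((pd1 (pd2 ψ) p.1 p.2) ^ 2 + (pd2 (pd2 ψ) p.1 p.2) ^ 2) ∧
      lap f p.1 p.2 ≥ 0) ∧
    (∀ p ∈ Ω,
      (pd2 ψ p.1 p.2) ^ 2 ≤ A * (r - p.2) - B * (r - p.2) ^ 2 ∧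
      (pd2 ψ p.1 p.2) ^ 2 ≤ A * (r - p.2)) := by
  have hu : ContDiff ℝ 2 (uncurry (pd2 ψ)) := hψ.uncurry_pd2 (by norm_num)
  have hfeq : f = fun x y => pd2 ψ x y ^ 2 - A * (r - y) + B * (r - y) ^ 2 := funext₂ hf
  have hlap (p : ℝ × ℝ) (hp : p ∈ Ω) :
      lap f p.1 p.2 ≥ 2 * ((pd1 (pd2 ψ) p.1 p.2) ^ 2 + (pd2 (pd2 ψ) p.1 p.2) ^ 2) := by
    rw [hfeq, lap_sq_sub_mul_add_mul_sq hu]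
    have hkey : pd2 ψ p.1 p.2 * lap (pd2 ψ) p.1 p.2 =
        -(pd2 ψ p.1 p.2 ^ 2 * deriv ω (ψ p.1 p.2)) := by
      linear_combination pd2 ψ p.1 p.2 * lap_pd2_add_deriv_mul_eq_zero hΩopen hψ hω hpde p hp
    linarith [hB p hp, mul_le_mul_of_nonneg_left (le_abs_self (deriv ω (ψ p.1 p.2)))
      (sq_nonneg (pd2 ψ p.1 p.2))]
  have hsub (p : ℝ × ℝ) (hp : p ∈ Ω) : 0 ≤ lap f p.1 p.2 := (hlap p hp).trans' (by positivity)
  have hle := nonpos_of_lap_nonneg hΩopen hΩbdd (by rw [hfeq]; fun_prop) hsub hbdry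
  refine ⟨fun p hp => ⟨hlap p hp, hsub p hp⟩, fun p hp => ?_⟩
  have hB0 : 0 ≤ B := (mul_nonneg (sq_nonneg _) (abs_nonneg _)).trans (hB p hp)
  have := hf p.1 p.2 ▸ hle p hp
  constructor <;> linarith [mul_nonneg hB0 (sq_nonneg (r - p.2))]

theorem stmt_19 (r A B : ℝ) (Ω : Set (ℝ × ℝ))
    (hΩopen : IsOpen Ω) (hΩbdd : Bornology.IsBounded Ω)
    (hΩbelow : ∀ p ∈ Ω, p.2 < r)
    (ψ : ℝ → ℝ → ℝ) (ω : ℝ → ℝ)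
    (hψ : ContDiff ℝ 3 (Function.uncurry ψ)) (hω : ContDiff ℝ 1 ω)
    (hpde : ∀ p ∈ Ω, lap ψ p.1 p.2 + ω (ψ p.1 p.2) = 0)
    (hB : ∀ p ∈ Ω, (pd2 ψ p.1 p.2) ^ 2 * |deriv ω (ψ p.1 p.2)| ≤ B)
    (f : ℝ → ℝ → ℝ)
    (hf : ∀ x y : ℝ, f x y = (pd2 ψ x y) ^ 2 - A * (r - y) + B * (r - y) ^ 2)
    (hbdry : ∀ p ∈ frontier Ω, f p.1 p.2 ≤ 0) :
    (∀ p ∈ Ω,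
      lap f p.1 p.2 ≥ 2 * ((pd1 (pd2 ψ) p.1 p.2) ^ 2 + (pd2 (pd2 ψ) p.1 p.2) ^ 2) ∧
      lap f p.1 p.2 ≥ 0) ∧
    (∀ p ∈ Ω,
      (pd2 ψ p.1 p.2) ^ 2 ≤ A * (r - p.2) - B * (r - p.2) ^ 2 ∧
      (pd2 ψ p.1 p.2) ^ 2 ≤ A * (r - p.2)) :=
  stmt_19_general r A B Ω hΩopen hΩbdd ψ ω hψ hω hpde hB f hf hbdry
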